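/- Suppose the norm ‖·‖ on ℝ^k satisfies Assumption 1, 0 < γ₂ ≤ γ₁ ≤ 1, 0 < C₁ ≤ C₂, and Λ₊,V(γ₁,C₁) ⊆ Λ₊,V(γ₂,C₂). Fix b > 0, design points x₁,…,x_n ∈ ℝ^k, and σ : ℝ^k → (0,∞). Define g₁*(x) := b − C₁‖(x)_{V−}‖^{γ₁} and g₂*(x) := min{ b − C₁‖(x)_{V−}‖^{γ₁}, C₂‖(x)_{V+}‖^{γ₂} }. Then g₁* ∈ Λ₊,V(γ₁,C₁), g₂* ∈ Λ₊,V(γ₂,C₂), g₁*(0) − g₂*(0) = b, and for every g₁ ∈ Λ₊,V(γ₁,C₁) and g₂ ∈ Λ₊,V(γ₂,C₂) with g₁(0) − g₂(0) = b one has Σ_{i=1}^n ((g₁(x_i) − g₂(x_i))/σ(x_i))² ≥ Σ_{i=1}^n ((b − C₁‖(x_i)_{V−}‖^{γ₁} − C₂‖(x_i)_{V+}‖^{γ₂})₊/σ(x_i))², with equality when (g₁,g₂) = (g₁*,g₂*); i.e., (g₁*,g₂*) solves the inverse ordered modulus problem ω⁻¹(b, Λ₊,V(γ₂,C₂), Λ₊,V(γ₁,C₁)).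 -/
import Mathlib


open MeasureTheory Filter Finset

/-- Positive part of a vector relative to coordinate set `V`. -/
def vplus {k : ℕ} (V : Finset (Fin k)) (z : Fin k → ℝ) : Fin k → ℝ :=
  fun j => if j ∈ V then max (z j) 0 else z j

/-- Negative part of a vector relative to coordinate set `V`. -/
def vminus {k : ℕ} (V : Finset (Fin k)) (z : Fin k → ℝ) : Fin k → ℝ :=
  vplus V (-z)

/-- A norm on `ℝ^k` satisfying Assumption 1 (monotone in the magnitude of each coordinate). -/
structure MonNorm (k : ℕ) where
  N : (Fin k → ℝ) → ℝ
  add_le : ∀ x y, N (x + y) ≤ N x + N y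
  smul_eq : ∀ (a : ℝ) (x), N (a • x) = |a| * N x
  eq_zero_iff : ∀ x, N x = 0 ↔ x = 0
  mono : ∀ z w : Fin k → ℝ, (∀ j, |z j| ≤ |w j|) → N z ≤ N w

/-- Hölder continuity with exponent `γ` and constant `C` w.r.t. the norm `N`. -/
def HolderW {k : ℕ} (N : (Fin k → ℝ) → ℝ) (γ C : ℝ) (f : (Fin k → ℝ) → ℝ) : Prop :=
  ∀ x z : Fin k → ℝ, |f x - f z| ≤ C * N (x - z) ^ γ

/-- Coordinatewise monotonicity w.r.t. the coordinates in `V`. -/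
def MonoV {k : ℕ} (V : Finset (Fin k)) (f : (Fin k → ℝ) → ℝ) : Prop :=
  ∀ x z : Fin k → ℝ, (∀ j ∈ V, z j ≤ x j) → (∀ j ∉ V, x j = z j) → f z ≤ f x

/-- The monotone Hölder class `Λ₊,V(γ,C)`. -/
def Lam {k : ℕ} (V : Finset (Fin k)) (N : (Fin k → ℝ) → ℝ) (γ C : ℝ) :
    Set ((Fin k → ℝ) → ℝ) :=
  {f | HolderW N γ C f ∧ MonoV V f}

/-- Inverse ordered modulus of continuity for the linear functional `f ↦ f(0)`:
the infimum of the root-mean-square distance at the design points over pairs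
`f ∈ F`, `g ∈ G` with `g(0) − f(0) = b`. -/
noncomputable def invMod {k : ℕ} (n : ℕ) (x : Fin n → (Fin k → ℝ))
    (σ : (Fin k → ℝ) → ℝ) (b : ℝ) (F G : Set ((Fin k → ℝ) → ℝ)) : ℝ :=
  sInf {r : ℝ | ∃ f ∈ F, ∃ g ∈ G, g 0 - f 0 = b ∧
    r = Real.sqrt (∑ i, ((g (x i) - f (x i)) / σ (x i)) ^ 2)}

section Aux

variable {k : ℕ}

lemma MonNorm.neg_eq (Nm : MonNorm k) (x : Fin k → ℝ) : Nm.N (-x) = Nm.N x := by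
  have := Nm.smul_eq (-1) x
  simpa using this

lemma MonNorm.nonneg (Nm : MonNorm k) (x : Fin k → ℝ) : 0 ≤ Nm.N x := by
  have h0 : Nm.N 0 = 0 := (Nm.eq_zero_iff 0).2 rfl
  have := Nm.add_le x (-x)
  rw [add_neg_cancel, h0, Nm.neg_eq] at this
  linarith

lemma MonNorm.zero_eq (Nm : MonNorm k) : Nm.N 0 = 0 := (Nm.eq_zero_iff 0).2 rfl

lemma MonNorm.sub_le (Nm : MonNorm k) (x z : Fin k → ℝ) :
    Nm.N x - Nm.N z ≤ Nm.N (x - z) := by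
  have := Nm.add_le (x - z) z
  rw [sub_add_cancel] at this
  linarith

lemma rpow_add_le_add_rpow' {a c γ : ℝ} (ha : 0 ≤ a) (hc : 0 ≤ c) (h0 : 0 ≤ γ)
    (h1 : γ ≤ 1) : (a + c) ^ γ ≤ a ^ γ + c ^ γ := by
  lift a to NNReal using ha
  lift c to NNReal using hc
  have := NNReal.rpow_add_le_add_rpow a c h0 h1
  exact_mod_cast this

lemma rpow_sub_rpow_le {a c γ : ℝ} (ha : 0 ≤ a) (hc : 0 ≤ c) (h0 : 0 ≤ γ)
    (h1 : γ ≤ 1) : a ^ γ - c ^ γ ≤ |a - c| ^ γ := by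
  rcases le_total a c with h | h
  · have h2 : a ^ γ ≤ c ^ γ := Real.rpow_le_rpow ha h h0
    have : (0:ℝ) ≤ |a - c| ^ γ := Real.rpow_nonneg (abs_nonneg _) _
    linarith
  · have : a = (a - c) + c := by ring
    calc a ^ γ - c ^ γ = ((a - c) + c) ^ γ - c ^ γ := by rw [← this]
      _ ≤ ((a - c) ^ γ + c ^ γ) - c ^ γ := by
          linarith [rpow_add_le_add_rpow' (sub_nonneg.2 h) hc h0 h1]
      _ = (a - c) ^ γ := by ring
      _ = |a - c| ^ γ := by rw [abs_of_nonneg (sub_nonneg.2 h)]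

lemma abs_rpow_sub_rpow_le {a c γ : ℝ} (ha : 0 ≤ a) (hc : 0 ≤ c) (h0 : 0 ≤ γ)
    (h1 : γ ≤ 1) : |a ^ γ - c ^ γ| ≤ |a - c| ^ γ := by
  rw [abs_sub_le_iff]
  constructor
  · exact rpow_sub_rpow_le ha hc h0 h1
  · rw [abs_sub_comm]; exact rpow_sub_rpow_le hc ha h0 h1

lemma vplus_contract (V : Finset (Fin k)) (x z : Fin k → ℝ) (j : Fin k) :
    |vplus V x j - vplus V z j| ≤ |x j - z j| := by
  simp only [vplus]
  split
  · exact abs_max_sub_max_le_abs _ _ _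
  · exact le_refl _

lemma vminus_contract (V : Finset (Fin k)) (x z : Fin k → ℝ) (j : Fin k) :
    |vminus V x j - vminus V z j| ≤ |x j - z j| := by
  simp only [vminus]
  calc |vplus V (-x) j - vplus V (-z) j| ≤ |(-x) j - (-z) j| :=
        vplus_contract V (-x) (-z) j
    _ = |x j - z j| := by
        rw [Pi.neg_apply, Pi.neg_apply, show -x j - -z j = -(x j - z j) by ring, abs_neg]

lemma N_vplus_sub_le (Nm : MonNorm k) (V : Finset (Fin k)) (x z : Fin k → ℝ) :
    |Nm.N (vplus V x) - Nm.N (vplus V z)| ≤ Nm.N (x - z) := by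
  have h1 : Nm.N (vplus V x - vplus V z) ≤ Nm.N (x - z) :=
    Nm.mono _ _ (fun j => vplus_contract V x z j)
  have h2 : Nm.N (vplus V z - vplus V x) ≤ Nm.N (z - x) :=
    Nm.mono _ _ (fun j => vplus_contract V z x j)
  rw [abs_sub_le_iff]
  constructor
  · linarith [Nm.sub_le (vplus V x) (vplus V z)]
  · have := Nm.sub_le (vplus V z) (vplus V x)
    have h3 : Nm.N (z - x) = Nm.N (x - z) := by
      rw [← Nm.neg_eq (x - z)]; congr 1; abel
    linarith

lemma N_vminus_sub_le (Nm : MonNorm k) (V : Finset (Fin k)) (x z : Fin k → ℝ) :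
    |Nm.N (vminus V x) - Nm.N (vminus V z)| ≤ Nm.N (x - z) := by
  have h := N_vplus_sub_le Nm V (-x) (-z)
  rw [show (-x : Fin k → ℝ) - -z = -(x - z) by abel, Nm.neg_eq] at h
  simpa [vminus] using h

lemma vplus_zero (V : Finset (Fin k)) : vplus V (0 : Fin k → ℝ) = 0 := by
  funext j; simp [vplus]

lemma vminus_zero (V : Finset (Fin k)) : vminus V (0 : Fin k → ℝ) = 0 := by
  simp [vminus, vplus_zero]

lemma sub_min_eq_max (a c : ℝ) : a - min a c = max (a - c) 0 := by
  rcases le_total a c with h | h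
  · rw [min_eq_left h, max_eq_right (by linarith), sub_self]
  · rw [min_eq_right h, max_eq_left (by linarith)]

lemma key_lower (Nm : MonNorm k) (V : Finset (Fin k)) {γ₁ γ₂ C₁ C₂ : ℝ}
    {g₁ g₂ : (Fin k → ℝ) → ℝ}
    (h₁ : g₁ ∈ Lam V Nm.N γ₁ C₁) (h₂ : g₂ ∈ Lam V Nm.N γ₂ C₂) (y : Fin k → ℝ) :
    (g₁ 0 - g₂ 0) - C₁ * Nm.N (vminus V y) ^ γ₁ - C₂ * Nm.N (vplus V y) ^ γ₂
      ≤ g₁ y - g₂ y := by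
  obtain ⟨hH₁, hM₁⟩ := h₁
  obtain ⟨hH₂, hM₂⟩ := h₂
  -- lower bound for g₁ y
  have hw : g₁ (-vminus V y) ≤ g₁ y := by
    apply hM₁
    · intro j hj
      simp only [vminus, vplus, hj, if_pos, Pi.neg_apply]
      have : -max (-y j) 0 ≤ y j := by
        rcases le_total (y j) 0 with h | h
        · simp [max_eq_left (by linarith : (0:ℝ) ≤ -y j)]
        · have : max (-y j) 0 = 0 := max_eq_right (by linarith)
          simp [this, h]
      simpa using this
    · intro j hj
      simp [vminus, vplus, hj]
  have hw2 : |g₁ 0 - g₁ (-vminus V y)| ≤ C₁ * Nm.N (vminus V y) ^ γ₁ := by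
    have := hH₁ 0 (-vminus V y)
    simpa using this
  have hg1 : g₁ 0 - C₁ * Nm.N (vminus V y) ^ γ₁ ≤ g₁ y := by
    have := (abs_le.mp hw2).2
    linarith
  -- upper bound for g₂ y
  have hp : g₂ y ≤ g₂ (vplus V y) := by
    apply hM₂
    · intro j hj
      simp only [vplus, hj, if_pos]
      exact le_max_left _ _
    · intro j hj
      simp [vplus, hj]
  have hp2 : |g₂ (vplus V y) - g₂ 0| ≤ C₂ * Nm.N (vplus V y) ^ γ₂ := by
    have := hH₂ (vplus V y) 0
    simpa using this
  have hg2 : g₂ y ≤ g₂ 0 + C₂ * Nm.N (vplus V y) ^ γ₂ := by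
    have := (abs_le.mp hp2).2
    linarith
  linarith

end Aux

/-- solution of the inverse ordered modulus problem
`ω⁻¹(b, Λ₊,V(γ₂,C₂), Λ₊,V(γ₁,C₁))`. -/
theorem stmt_5 {k : ℕ} (V : Finset (Fin k)) (Nm : MonNorm k)
    (γ₁ γ₂ C₁ C₂ b : ℝ)
    (hγ₂0 : 0 < γ₂) (hγ : γ₂ ≤ γ₁) (hγ₁1 : γ₁ ≤ 1)
    (hC₁ : 0 < C₁) (hC : C₁ ≤ C₂)
    (hsub : Lam V Nm.N γ₁ C₁ ⊆ Lam V Nm.N γ₂ C₂)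
    (hb : 0 < b)
    (n : ℕ) (x : Fin n → (Fin k → ℝ)) (σ : (Fin k → ℝ) → ℝ) (hσ : ∀ y, 0 < σ y) :
    (fun y => b - C₁ * Nm.N (vminus V y) ^ γ₁) ∈ Lam V Nm.N γ₁ C₁ ∧
    (fun y => min (b - C₁ * Nm.N (vminus V y) ^ γ₁) (C₂ * Nm.N (vplus V y) ^ γ₂)) ∈
      Lam V Nm.N γ₂ C₂ ∧
    (b - C₁ * Nm.N (vminus V (0 : Fin k → ℝ)) ^ γ₁) -
      min (b - C₁ * Nm.N (vminus V (0 : Fin k → ℝ)) ^ γ₁)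
        (C₂ * Nm.N (vplus V (0 : Fin k → ℝ)) ^ γ₂) = b ∧
    (∀ g₁ ∈ Lam V Nm.N γ₁ C₁, ∀ g₂ ∈ Lam V Nm.N γ₂ C₂, g₁ 0 - g₂ 0 = b →
      ∑ i, (max (b - C₁ * Nm.N (vminus V (x i)) ^ γ₁ - C₂ * Nm.N (vplus V (x i)) ^ γ₂) 0
            / σ (x i)) ^ 2
        ≤ ∑ i, ((g₁ (x i) - g₂ (x i)) / σ (x i)) ^ 2) ∧
    (∑ i, (((b - C₁ * Nm.N (vminus V (x i)) ^ γ₁) -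
            min (b - C₁ * Nm.N (vminus V (x i)) ^ γ₁) (C₂ * Nm.N (vplus V (x i)) ^ γ₂))
            / σ (x i)) ^ 2
      = ∑ i, (max (b - C₁ * Nm.N (vminus V (x i)) ^ γ₁ - C₂ * Nm.N (vplus V (x i)) ^ γ₂) 0
            / σ (x i)) ^ 2) ∧
    (invMod n x σ b (Lam V Nm.N γ₂ C₂) (Lam V Nm.N γ₁ C₁)) ^ 2
      = ∑ i, (max (b - C₁ * Nm.N (vminus V (x i)) ^ γ₁ - C₂ * Nm.N (vplus V (x i)) ^ γ₂) 0
            / σ (x i)) ^ 2 := by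
  have hγ₁0 : 0 < γ₁ := lt_of_lt_of_le hγ₂0 hγ
  have hC₂ : 0 < C₂ := lt_of_lt_of_le hC₁ hC
  -- g₁* ∈ Lam γ₁ C₁
  have hA : (fun y => b - C₁ * Nm.N (vminus V y) ^ γ₁) ∈ Lam V Nm.N γ₁ C₁ := by
    constructor
    · intro y z
      have h1 : |Nm.N (vminus V y) ^ γ₁ - Nm.N (vminus V z) ^ γ₁|
          ≤ |Nm.N (vminus V y) - Nm.N (vminus V z)| ^ γ₁ :=
        abs_rpow_sub_rpow_le (Nm.nonneg _) (Nm.nonneg _) hγ₁0.le hγ₁1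
      have h2 : |Nm.N (vminus V y) - Nm.N (vminus V z)| ^ γ₁ ≤ Nm.N (y - z) ^ γ₁ :=
        Real.rpow_le_rpow (abs_nonneg _) (N_vminus_sub_le Nm V y z) hγ₁0.le
      calc |(b - C₁ * Nm.N (vminus V y) ^ γ₁) - (b - C₁ * Nm.N (vminus V z) ^ γ₁)|
          = C₁ * |Nm.N (vminus V y) ^ γ₁ - Nm.N (vminus V z) ^ γ₁| := by
            rw [show (b - C₁ * Nm.N (vminus V y) ^ γ₁) - (b - C₁ * Nm.N (vminus V z) ^ γ₁)
                = C₁ * (Nm.N (vminus V z) ^ γ₁ - Nm.N (vminus V y) ^ γ₁) by ring,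
              abs_mul, abs_of_pos hC₁, abs_sub_comm]
        _ ≤ C₁ * Nm.N (y - z) ^ γ₁ := by
            apply mul_le_mul_of_nonneg_left _ hC₁.le
            exact h1.trans h2
    · intro y z hV hVc
      have hN : Nm.N (vminus V y) ≤ Nm.N (vminus V z) := by
        apply Nm.mono
        intro j
        by_cases hj : j ∈ V
        · simp only [vminus, vplus, hj, if_pos, Pi.neg_apply]
          rw [abs_of_nonneg (le_max_right _ _), abs_of_nonneg (le_max_right _ _)]
          exact max_le_max (neg_le_neg (hV j hj)) le_rfl
        · simp [vminus, vplus, hj, hVc j hj]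
      have : Nm.N (vminus V y) ^ γ₁ ≤ Nm.N (vminus V z) ^ γ₁ :=
        Real.rpow_le_rpow (Nm.nonneg _) hN hγ₁0.le
      simp only
      nlinarith
  -- h := C₂ N(vplus ·)^γ₂ ∈ Lam γ₂ C₂
  have hH : (fun y => C₂ * Nm.N (vplus V y) ^ γ₂) ∈ Lam V Nm.N γ₂ C₂ := by
    constructor
    · intro y z
      have h1 : |Nm.N (vplus V y) ^ γ₂ - Nm.N (vplus V z) ^ γ₂|
          ≤ |Nm.N (vplus V y) - Nm.N (vplus V z)| ^ γ₂ :=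
        abs_rpow_sub_rpow_le (Nm.nonneg _) (Nm.nonneg _) hγ₂0.le (hγ.trans hγ₁1)
      have h2 : |Nm.N (vplus V y) - Nm.N (vplus V z)| ^ γ₂ ≤ Nm.N (y - z) ^ γ₂ :=
        Real.rpow_le_rpow (abs_nonneg _) (N_vplus_sub_le Nm V y z) hγ₂0.le
      calc |C₂ * Nm.N (vplus V y) ^ γ₂ - C₂ * Nm.N (vplus V z) ^ γ₂|
          = C₂ * |Nm.N (vplus V y) ^ γ₂ - Nm.N (vplus V z) ^ γ₂| := by
            rw [show C₂ * Nm.N (vplus V y) ^ γ₂ - C₂ * Nm.N (vplus V z) ^ γ₂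
                = C₂ * (Nm.N (vplus V y) ^ γ₂ - Nm.N (vplus V z) ^ γ₂) by ring, abs_mul,
              abs_of_pos hC₂]
        _ ≤ C₂ * Nm.N (y - z) ^ γ₂ := by
            apply mul_le_mul_of_nonneg_left _ hC₂.le
            exact h1.trans h2
    · intro y z hV hVc
      have hN : Nm.N (vplus V z) ≤ Nm.N (vplus V y) := by
        apply Nm.mono
        intro j
        by_cases hj : j ∈ V
        · simp only [vplus, hj, if_pos]
          rw [abs_of_nonneg (le_max_right _ _), abs_of_nonneg (le_max_right _ _)]
          exact max_le_max (hV j hj) le_rfl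
        · simp [vplus, hj, hVc j hj]
      have : Nm.N (vplus V z) ^ γ₂ ≤ Nm.N (vplus V y) ^ γ₂ :=
        Real.rpow_le_rpow (Nm.nonneg _) hN hγ₂0.le
      simp only
      nlinarith
  -- g₂* ∈ Lam γ₂ C₂
  have hA' := hsub hA
  have hB : (fun y => min (b - C₁ * Nm.N (vminus V y) ^ γ₁)
      (C₂ * Nm.N (vplus V y) ^ γ₂)) ∈ Lam V Nm.N γ₂ C₂ := by
    constructor
    · intro y z
      have h1 := hA'.1 y z
      have h2 := hH.1 y z
      have := abs_min_sub_min_le_max (b - C₁ * Nm.N (vminus V y) ^ γ₁)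
        (C₂ * Nm.N (vplus V y) ^ γ₂) (b - C₁ * Nm.N (vminus V z) ^ γ₁)
        (C₂ * Nm.N (vplus V z) ^ γ₂)
      exact this.trans (max_le h1 h2)
    · intro y z hV hVc
      exact min_le_min (hA'.2 y z hV hVc) (hH.2 y z hV hVc)
  refine ⟨hA, hB, ?_, ?_, ?_, ?_⟩
  · -- value at 0
    rw [vminus_zero, vplus_zero, Nm.zero_eq, Real.zero_rpow hγ₁0.ne',
      Real.zero_rpow hγ₂0.ne']
    rw [mul_zero, mul_zero, sub_zero, min_eq_right hb.le, sub_zero]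
  · -- lower bound
    intro g₁ hg₁ g₂ hg₂ hb'
    apply Finset.sum_le_sum
    intro i _
    set d := g₁ (x i) - g₂ (x i) with hd
    have hkey := key_lower Nm V hg₁ hg₂ (x i)
    rw [hb'] at hkey
    have h1 : max (b - C₁ * Nm.N (vminus V (x i)) ^ γ₁ - C₂ * Nm.N (vplus V (x i)) ^ γ₂) 0
        ≤ |d| := max_le ((by linarith : _ ≤ d).trans (le_abs_self d)) (abs_nonneg d)
    have hσi := hσ (x i)
    have h2 : max (b - C₁ * Nm.N (vminus V (x i)) ^ γ₁ - C₂ * Nm.N (vplus V (x i)) ^ γ₂) 0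
        / σ (x i) ≤ |d / σ (x i)| := by
      rw [abs_div, abs_of_pos hσi]
      exact div_le_div_of_nonneg_right h1 hσi.le
    calc (max (b - C₁ * Nm.N (vminus V (x i)) ^ γ₁ - C₂ * Nm.N (vplus V (x i)) ^ γ₂) 0
        / σ (x i)) ^ 2 ≤ |d / σ (x i)| ^ 2 := by
          apply pow_le_pow_left₀ _ h2
          positivity
      _ = (d / σ (x i)) ^ 2 := sq_abs _
  · -- equality identity
    apply Finset.sum_congr rfl
    intro i _
    congr 2
    exact sub_min_eq_max _ _
  · -- infimum value
    set S := {r : ℝ | ∃ f ∈ Lam V Nm.N γ₂ C₂, ∃ g ∈ Lam V Nm.N γ₁ C₁, g 0 - f 0 = b ∧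
      r = Real.sqrt (∑ i, ((g (x i) - f (x i)) / σ (x i)) ^ 2)} with hS
    set S0 := ∑ i, (max (b - C₁ * Nm.N (vminus V (x i)) ^ γ₁
      - C₂ * Nm.N (vplus V (x i)) ^ γ₂) 0 / σ (x i)) ^ 2 with hS0
    have hS0nn : 0 ≤ S0 := Finset.sum_nonneg (fun i _ => sq_nonneg _)
    have hmem : Real.sqrt S0 ∈ S := by
      refine ⟨_, hB, _, hA, ?_, ?_⟩
      · rw [vminus_zero, vplus_zero, Nm.zero_eq, Real.zero_rpow hγ₁0.ne',
          Real.zero_rpow hγ₂0.ne']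
        rw [mul_zero, mul_zero, sub_zero, min_eq_right hb.le, sub_zero]
      · congr 1
        apply Finset.sum_congr rfl
        intro i _
        congr 2
        exact (sub_min_eq_max _ _).symm
    have hlb : ∀ r ∈ S, Real.sqrt S0 ≤ r := by
      rintro r ⟨f, hf, g, hg, hb', rfl⟩
      apply Real.sqrt_le_sqrt
      apply Finset.sum_le_sum
      intro i _
      set d := g (x i) - f (x i) with hd
      have hkey := key_lower Nm V hg hf (x i)
      rw [hb'] at hkey
      have h1 : max (b - C₁ * Nm.N (vminus V (x i)) ^ γ₁
          - C₂ * Nm.N (vplus V (x i)) ^ γ₂) 0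
          ≤ |d| := max_le ((by linarith : _ ≤ d).trans (le_abs_self d)) (abs_nonneg d)
      have hσi := hσ (x i)
      have h2 : max (b - C₁ * Nm.N (vminus V (x i)) ^ γ₁
          - C₂ * Nm.N (vplus V (x i)) ^ γ₂) 0
          / σ (x i) ≤ |d / σ (x i)| := by
        rw [abs_div, abs_of_pos hσi]
        exact div_le_div_of_nonneg_right h1 hσi.le
      calc (max (b - C₁ * Nm.N (vminus V (x i)) ^ γ₁
          - C₂ * Nm.N (vplus V (x i)) ^ γ₂) 0 / σ (x i)) ^ 2
          ≤ |d / σ (x i)| ^ 2 := by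
            apply pow_le_pow_left₀ _ h2
            positivity
        _ = (d / σ (x i)) ^ 2 := sq_abs _
    have hinf : invMod n x σ b (Lam V Nm.N γ₂ C₂) (Lam V Nm.N γ₁ C₁) = Real.sqrt S0 := by
      rw [invMod]
      exact le_antisymm (csInf_le ⟨Real.sqrt S0, hlb⟩ hmem) (le_csInf ⟨_, hmem⟩ hlb)
    rw [hinf, Real.sq_sqrt hS0nn]
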